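/- Let H be a real Hilbert space, K > 1/2, and set η := 2K − 1. Let X : ℝ → H be differentiable on [0, ∞), and let g, d : ℝ → H be such that for all t ≥ 0: X′(t) = −g(t) − K (1 + t) X(t) + d(t), ⟨g(t), X(t)⟩ ≥ 0, and ‖d(t)‖ ≤ D for a constant D ≥ 0. Then there exists a constant C > 0, depending only on η, such that for all t ≥ 0: ‖X(t)‖² ≤ e^{−η t (t + 2) / 2} ‖X(0)‖² + C · D² / (1 + t)². In particular, when D = 0 the state decays hyperexponentially, i.e. faster than any exponential rate. -/

import Mathlib

/-!
Accretivity of `A` and Young's inequality with weight `1 + t` give, for `y = ‖X‖²`,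
`y' ≤ -η (1 + t) y + D² / (1 + t)`. With the integrating factor `exp (η t (t + 2) / 2)`,
`y - D² w` is then dominated by its initial value, where `w t = a / (T + t) ^ 2`
(`T = 1 + 4 / η`, `a = 2 T² / η`) is a supersolution of the forced equation and is at most
`a / (1 + t) ^ 2`.
-/

open Real Set

lemma hasDerivAt_mul_add_two_div_two (t : ℝ) :
    HasDerivAt (fun s : ℝ => s * (s + 2) / 2) (1 + t) t :=
  (((hasDerivAt_id t).mul ((hasDerivAt_id t).add_const 2)).div_const 2).congr_deriv
    (by simp only [id]; ring)

lemma antitoneOn_exp_mul_of_hasDerivAt_le {f f' P p : ℝ → ℝ} {a : ℝ}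
    (hf : ContinuousOn f (Ici a)) (hf' : ∀ t > a, HasDerivAt f (f' t) t)
    (hP : ∀ t, HasDerivAt P (p t) t) (hle : ∀ t > a, f' t ≤ -(p t * f t)) :
    AntitoneOn (fun t => exp (P t) * f t) (Ici a) := by
  have hPc : Continuous P := continuous_iff_continuousAt.2 fun t => (hP t).continuousAt
  refine antitoneOn_of_hasDerivWithinAt_nonpos (convex_Ici a)
    (f' := fun t => exp (P t) * p t * f t + exp (P t) * f' t)
    ((continuous_exp.comp hPc).continuousOn.mul hf) (fun t ht => ?_) (fun t ht => ?_)
  · rw [interior_Ici] at ht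
    exact (((hP t).exp).mul (hf' t ht)).hasDerivWithinAt
  · rw [interior_Ici] at ht
    have h := mul_le_mul_of_nonneg_left (hle t ht) (exp_pos (P t)).le
    linarith

lemma hasDerivAt_div_add_sq (a T : ℝ) {t : ℝ} (ht : T + t ≠ 0) :
    HasDerivAt (fun s => a / (T + s) ^ 2) (-2 * a / (T + t) ^ 3) t := by
  have hsq := ((hasDerivAt_id t).const_add T).fun_pow 2
  refine ((hasDerivAt_const t a).div hsq (pow_ne_zero 2 ht)).congr_deriv ?_
  simp only [id]
  field_simp
  ring

/-- `w t = a / (T + t) ^ 2` is a supersolution of `w' = -η (1 + t) w + 1 / (1 + t)`: the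
shift `T ≥ 4 / η` absorbs the negative derivative near `t = 0`. -/
lemma one_div_le_deriv_add_mul_div_add_sq {η a T t : ℝ} (hT : 1 ≤ T) (hηT : 4 ≤ η * T)
    (ha : 2 * T ^ 2 ≤ η * a) (ht : 0 ≤ t) :
    1 / (1 + t) ≤ -2 * a / (T + t) ^ 3 + η * (1 + t) * (a / (T + t) ^ 2) := by
  have hs : 0 < 1 + t := by linarith
  have hu : 0 < T + t := by linarith
  have hsu : 1 + t ≤ T + t := by linarith
  have hus : T + t ≤ T * (1 + t) := by nlinarith
  have hη : 0 < η := by nlinarith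
  have ha0 : 0 ≤ a := by nlinarith
  have hlarge : 4 ≤ η * (1 + t) * (T + t) := by
    have : T ≤ (1 + t) * (T + t) := by nlinarith
    nlinarith [mul_le_mul_of_nonneg_left this hη.le]
  have hcleared : (T + t) ^ 3 ≤ (1 + t) * (a * (η * (1 + t) * (T + t) - 2)) := by
    calc (T + t) ^ 3 ≤ T ^ 2 * (1 + t) ^ 2 * (T + t) := by
          have := pow_le_pow_left₀ hu.le hus 2
          nlinarith
      _ ≤ η * a / 2 * (1 + t) ^ 2 * (T + t) := by gcongr; linarith
      _ ≤ (1 + t) * (a * (η * (1 + t) * (T + t) - 2)) := by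
          have hgap : 0 ≤ η * (1 + t) * (T + t) - 4 := by linarith
          nlinarith [mul_nonneg (mul_nonneg ha0 hs.le) hgap]
  rw [div_le_iff₀ hs]
  have hcombine : -2 * a / (T + t) ^ 3 + η * (1 + t) * (a / (T + t) ^ 2) =
      a * (η * (1 + t) * (T + t) - 2) / (T + t) ^ 3 := by
    field_simp; ring
  rw [hcombine, div_mul_eq_mul_div, le_div_iff₀ (by positivity)]
  linarith

theorem le_exp_mul_add_of_hasDerivAt_le {η D : ℝ} (hη : 0 < η) {y y' : ℝ → ℝ}
    (hy : ContinuousOn y (Ici 0)) (hy' : ∀ t > 0, HasDerivAt y (y' t) t)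
    (hle : ∀ t > 0, y' t ≤ -(η * (1 + t) * y t) + D ^ 2 / (1 + t)) {t : ℝ} (ht : 0 ≤ t) :
    y t ≤ exp (-(η * t * (t + 2) / 2)) * y 0 + 2 * (1 + 4 / η) ^ 2 / η * D ^ 2 / (1 + t) ^ 2 := by
  set T := 1 + 4 / η
  set a := 2 * T ^ 2 / η
  have hT : 1 ≤ T := by have := div_pos four_pos hη; linarith
  have hηT : 4 ≤ η * T := by simp only [T]; field_simp; linarith
  have ha : 2 * T ^ 2 ≤ η * a := by simp only [a]; field_simp; rfl
  set w := fun s => a / (T + s) ^ 2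
  have hw : ∀ s ≥ 0, HasDerivAt w (-2 * a / (T + s) ^ 3) s :=
    fun s hs => hasDerivAt_div_add_sq a T (by linarith)
  have hanti := antitoneOn_exp_mul_of_hasDerivAt_le (f := fun s => y s - D ^ 2 * w s)
    (P := fun s => η * (s * (s + 2) / 2)) (p := fun s => η * (1 + s))
    (hy.sub (continuousOn_const.mul fun s hs => (hw s hs).continuousAt.continuousWithinAt))
    (fun s hs => (hy' s hs).sub ((hw s hs.le).const_mul _))
    (fun s => (hasDerivAt_mul_add_two_div_two s).const_mul η)
    (fun s hs => by
      have hsuper := mul_le_mul_of_nonneg_left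
        (one_div_le_deriv_add_mul_div_add_sq hT hηT ha hs.le) (sq_nonneg D)
      have hys := hle s hs
      simp only [w]
      rw [mul_one_div] at hsuper
      linarith)
  have hmono : exp (η * (t * (t + 2) / 2)) * (y t - D ^ 2 * w t) ≤ y 0 - D ^ 2 * w 0 := by
    simpa using hanti self_mem_Ici ht ht
  have hdecay : y t - D ^ 2 * w t ≤ exp (-(η * t * (t + 2) / 2)) * (y 0 - D ^ 2 * w 0) := by
    rw [show -(η * t * (t + 2) / 2) = -(η * (t * (t + 2) / 2)) by ring, exp_neg,
      ← div_eq_inv_mul, le_div_iff₀' (exp_pos _)]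
    exact hmono
  have hwt : w t ≤ a / (1 + t) ^ 2 := by
    show a / (T + t) ^ 2 ≤ _
    gcongr
  have hw0 : 0 ≤ exp (-(η * t * (t + 2) / 2)) * (D ^ 2 * w 0) := by positivity
  calc y t = (y t - D ^ 2 * w t) + D ^ 2 * w t := by ring
    _ ≤ exp (-(η * t * (t + 2) / 2)) * (y 0 - D ^ 2 * w 0) + D ^ 2 * (a / (1 + t) ^ 2) :=
      add_le_add hdecay (mul_le_mul_of_nonneg_left hwt (sq_nonneg D))
    _ = exp (-(η * t * (t + 2) / 2)) * y 0 - exp (-(η * t * (t + 2) / 2)) * (D ^ 2 * w 0)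
        + a * D ^ 2 / (1 + t) ^ 2 := by ring
    _ ≤ exp (-(η * t * (t + 2) / 2)) * y 0 + a * D ^ 2 / (1 + t) ^ 2 := by linarith

lemma two_inner_le_of_inner_nonneg {H : Type*} [NormedAddCommGroup H] [InnerProductSpace ℝ H]
    {K D s : ℝ} {x g d : H} (hg : 0 ≤ inner ℝ g x) (hd : ‖d‖ ≤ D) (hs : 0 < s) :
    2 * inner ℝ x (-g - (K * s) • x + d) ≤ -((2 * K - 1) * s * ‖x‖ ^ 2) + D ^ 2 / s := by
  have hexpand : inner ℝ x (-g - (K * s) • x + d) =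
      -inner ℝ g x - K * s * ‖x‖ ^ 2 + inner ℝ d x := by
    rw [inner_add_right, inner_sub_right, inner_neg_right, real_inner_smul_right,
      real_inner_self_eq_norm_sq, real_inner_comm g, real_inner_comm d]
  have hdx : inner ℝ d x ≤ D * ‖x‖ :=
    (real_inner_le_norm d x).trans (mul_le_mul_of_nonneg_right hd (norm_nonneg x))
  have hyoung : 2 * (D * ‖x‖) ≤ s * ‖x‖ ^ 2 + D ^ 2 / s := by
    rw [← sub_nonneg, show s * ‖x‖ ^ 2 + D ^ 2 / s - 2 * (D * ‖x‖) = (s * ‖x‖ - D) ^ 2 / s by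
      field_simp; ring]
    positivity
  rw [hexpand]
  linarith

theorem stmt_6_general {H : Type*} [NormedAddCommGroup H] [InnerProductSpace ℝ H]
    (K : ℝ) (hK : 1 / 2 < K) (η : ℝ) (hη : η = 2 * K - 1) :
    ∃ C > (0:ℝ), ∀ (D : ℝ), 0 ≤ D → ∀ (X X' g d : ℝ → H),
      (∀ t ≥ (0:ℝ), HasDerivWithinAt X (X' t) (Set.Ici 0) t) →
      (∀ t ≥ (0:ℝ), X' t = -g t - (K * (1 + t)) • X t + d t) →
      (∀ t ≥ (0:ℝ), 0 ≤ inner (g t) (X t) (𝕜 := ℝ)) →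
      (∀ t ≥ (0:ℝ), ‖d t‖ ≤ D) →
      ∀ t ≥ (0:ℝ),
        ‖X t‖ ^ 2 ≤ Real.exp (-(η * t * (t + 2) / 2)) * ‖X 0‖ ^ 2 +
          C * D ^ 2 / (1 + t) ^ 2 := by
  have hη0 : 0 < η := by linarith
  refine ⟨2 * (1 + 4 / η) ^ 2 / η, by positivity, fun D _ X X' g d hX hX' hg hd t ht => ?_⟩
  have hXc : ContinuousOn X (Ici 0) := fun s hs => (hX s hs).continuousWithinAt
  refine le_exp_mul_add_of_hasDerivAt_le hη0 (hXc.norm.pow 2)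
    (fun s hs => ((hX s hs.le).hasDerivAt (Ici_mem_nhds hs)).norm_sq) (fun s hs => ?_) ht
  rw [hX' s hs.le, hη]
  exact two_inner_le_of_inner_nonneg (hg s hs.le) (hd s hs.le) (by linarith)

theorem stmt_6 {H : Type*} [NormedAddCommGroup H] [InnerProductSpace ℝ H]
    [CompleteSpace H] (K : ℝ) (hK : 1 / 2 < K) (η : ℝ) (hη : η = 2 * K - 1) :
    ∃ C > (0:ℝ), ∀ (D : ℝ), 0 ≤ D → ∀ (X X' g d : ℝ → H),
      (∀ t ≥ (0:ℝ), HasDerivWithinAt X (X' t) (Set.Ici 0) t) →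
      (∀ t ≥ (0:ℝ), X' t = -g t - (K * (1 + t)) • X t + d t) →
      (∀ t ≥ (0:ℝ), 0 ≤ inner (g t) (X t) (𝕜 := ℝ)) →
      (∀ t ≥ (0:ℝ), ‖d t‖ ≤ D) →
      ∀ t ≥ (0:ℝ),
        ‖X t‖ ^ 2 ≤ Real.exp (-(η * t * (t + 2) / 2)) * ‖X 0‖ ^ 2 +
          C * D ^ 2 / (1 + t) ^ 2 :=
  stmt_6_general K hK η hη
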